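/- arXiv:q-alg/9504015 — 2 statements merged into one kernel-verified Lean document; each statement's English description precedes it below -/
import Mathlib

section
/- Let K be an odd prime and q = e^(2πi/K), x = q − 1. Then the Gauss sum Σ_{α=0}^{K-1} q^(α²) equals x^((K-1)/2) · u for some unit u of the ring ℤ[q] (i.e., u and u^(-1) both lie in ℤ[q]). -/
open Finset Polynomial

lemma aux_qpow_mod {K : ℕ} {q : ℂ} (hq1 : q ^ K = 1) (n : ℕ) : q ^ (n % K) = q ^ n := by
  conv_rhs => rw [← Nat.mod_add_div n K, pow_add, pow_mul, hq1, one_pow, mul_one]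

lemma aux_sum_range_zmod {K : ℕ} [NeZero K] {M : Type*} [AddCommMonoid M] (f : ZMod K → M) :
    ∑ α ∈ Finset.range K, f (α : ZMod K) = ∑ a : ZMod K, f a := by
  refine Finset.sum_nbij' (fun α => ((α : ZMod K))) (fun a => a.val) ?_ ?_ ?_ ?_ ?_
  · intro a _; exact Finset.mem_univ _
  · intro a _; exact Finset.mem_range.2 (ZMod.val_lt a)
  · intro a ha; exact ZMod.val_cast_of_lt (Finset.mem_range.1 ha)
  · intro a _; exact ZMod.natCast_zmod_val a
  · intro a _; rfl

lemma aux_sum_eval_zero {K : ℕ} [NeZero K] (hK : K.Prime) (P : Polynomial (ZMod K))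
    (hdeg : P.natDegree < K - 1) : ∑ a : ZMod K, P.eval a = 0 := by
  haveI : Fact K.Prime := ⟨hK⟩
  have h1 : ∀ a : ZMod K, P.eval a = ∑ i ∈ range (P.natDegree + 1), P.coeff i * a ^ i :=
    fun a => P.eval_eq_sum_range a
  simp_rw [h1]
  rw [Finset.sum_comm]
  refine Finset.sum_eq_zero fun i hi => ?_
  rw [← Finset.mul_sum]
  have h2 : ∑ a : ZMod K, a ^ i = 0 := by
    apply FiniteField.sum_pow_lt_card_sub_one
    rw [ZMod.card]
    have := Finset.mem_range.1 hi
    omega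
  rw [h2, mul_zero]

lemma aux_gauss_prod {K : ℕ} (hK : K.Prime) (hodd : Odd K) {q : ℂ} (hq1 : q ^ K = 1)
    (hqne : q ≠ 1) :
    (∑ α ∈ Finset.range K, q ^ (α ^ 2 % K)) *
      (∑ α ∈ Finset.range K, q ^ ((K - 1) * α ^ 2 % K)) = K := by
  haveI : NeZero K := ⟨hK.pos.ne'⟩
  haveI : Fact K.Prime := ⟨hK⟩
  set ψ : ZMod K → ℂ := fun a => q ^ a.val with hψ
  have hpsi_nat : ∀ n : ℕ, ψ (n : ZMod K) = q ^ n := by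
    intro n
    simp only [hψ, ZMod.val_natCast]
    exact aux_qpow_mod hq1 n
  have hpsi_add : ∀ a b : ZMod K, ψ (a + b) = ψ a * ψ b := by
    intro a b
    simp only [hψ]
    rw [ZMod.val_add, aux_qpow_mod hq1, pow_add]
  have hpsi_zero : ψ 0 = 1 := by
    have := hpsi_nat 0; simpa using this
  have hpsi_sum : ∑ b : ZMod K, ψ b = 0 := by
    rw [← aux_sum_range_zmod (f := ψ)]
    have : ∀ α ∈ Finset.range K, ψ ((α : ZMod K)) = q ^ α := fun α _ => hpsi_nat α
    rw [Finset.sum_congr rfl this, geom_sum_eq hqne K, hq1, sub_self, zero_div]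
  have hS : ∀ d : ZMod K, d ≠ 0 → ∑ b : ZMod K, ψ (d * b) = 0 := by
    intro d hd
    rw [Fintype.sum_equiv (Equiv.mulLeft₀ d hd) (fun b => ψ (d * b)) ψ (fun x => rfl)]
    exact hpsi_sum
  have h2ne : (2 : ZMod K) ≠ 0 := by
    intro h
    have hdvd : K ∣ 2 := by
      have h' : ((2 : ℕ) : ZMod K) = 0 := by exact_mod_cast h
      exact (ZMod.natCast_eq_zero_iff 2 K).mp h'
    have hK2 : K = 2 := (Nat.prime_dvd_prime_iff_eq hK Nat.prime_two).mp hdvd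
    rw [hK2] at hodd
    exact (by norm_num : ¬ Odd 2) hodd
  have hL1 : ∑ α ∈ Finset.range K, q ^ (α ^ 2 % K) = ∑ a : ZMod K, ψ (a ^ 2) := by
    rw [← aux_sum_range_zmod (f := fun a => ψ (a ^ 2))]
    refine Finset.sum_congr rfl fun α _ => ?_
    rw [aux_qpow_mod hq1, ← hpsi_nat (α ^ 2), Nat.cast_pow]
  have hL2 : ∑ α ∈ Finset.range K, q ^ ((K - 1) * α ^ 2 % K) = ∑ a : ZMod K, ψ (-(a ^ 2)) := by
    rw [← aux_sum_range_zmod (f := fun a => ψ (-(a ^ 2)))]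
    refine Finset.sum_congr rfl fun α _ => ?_
    rw [aux_qpow_mod hq1, ← hpsi_nat ((K - 1) * α ^ 2)]
    congr 1
    have hKcast : ((K - 1 : ℕ) : ZMod K) = -1 := by
      have h1 : (1 : ℕ) ≤ K := hK.one_lt.le
      push_cast [Nat.cast_sub h1]
      simp
    push_cast [hKcast]
    ring
  rw [hL1, hL2, Finset.sum_mul_sum]
  have hterm : ∀ a b : ZMod K, ψ (a ^ 2) * ψ (-(b ^ 2)) = ψ (a ^ 2 - b ^ 2) := by
    intro a b
    rw [← hpsi_add]
    ring_nf
  simp_rw [hterm]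
  rw [Finset.sum_comm]
  have hinner : ∀ b : ZMod K, ∑ a : ZMod K, ψ (a ^ 2 - b ^ 2)
      = ∑ c : ZMod K, ψ (c ^ 2) * ψ ((2 * c) * b) := by
    intro b
    refine (Fintype.sum_equiv (Equiv.addLeft b) _ _ fun c => ?_).symm
    show ψ (c ^ 2) * ψ ((2 * c) * b) = ψ ((b + c) ^ 2 - b ^ 2)
    rw [← hpsi_add]
    congr 1
    ring
  simp_rw [hinner]
  rw [Finset.sum_comm]
  have hout : ∀ c : ZMod K, ∑ b : ZMod K, ψ (c ^ 2) * ψ ((2 * c) * b)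
      = if c = 0 then (K : ℂ) else 0 := by
    intro c
    rw [← Finset.mul_sum]
    by_cases hc : c = 0
    · simp [hc, hpsi_zero, Finset.card_univ, ZMod.card]
    · rw [hS (2 * c) (mul_ne_zero h2ne hc), mul_zero, if_neg hc]
  simp_rw [hout]
  simp

lemma aux_Gc {K : ℕ} (hK : K.Prime) (hodd : Odd K) {q : ℂ} (hprim : IsPrimitiveRoot q K)
    (c : ℕ) :
    ∃ u ∈ Algebra.adjoin ℤ {q},
      ∑ α ∈ Finset.range K, q ^ (c * α ^ 2 % K) = (q - 1) ^ ((K - 1) / 2) * u := by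
  haveI : NeZero K := ⟨hK.pos.ne'⟩
  haveI : Fact K.Prime := ⟨hK⟩
  have hq1 : q ^ K = 1 := hprim.pow_eq_one
  have hK2 : K % 2 = 1 := Nat.odd_iff.mp hodd
  have hK3 : 3 ≤ K := by
    rcases Nat.lt_or_ge K 3 with h | h
    · interval_cases K
      · exact absurd rfl hK.ne_zero
      · exact absurd rfl hK.ne_one
      · omega
    · exact h
  set m := (K - 1) / 2 with hm
  have hmK : m < K := by omega
  set b : ℕ → ℕ := fun j => ∑ α ∈ Finset.range K, Nat.choose (c * α ^ 2 % K) j with hb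
  -- binomial expansion
  have hexp : ∀ n, n < K → q ^ n = ∑ j ∈ Finset.range K, (n.choose j : ℂ) * (q - 1) ^ j := by
    intro n hn
    calc q ^ n = ((q - 1) + 1) ^ n := by ring_nf
      _ = ∑ j ∈ Finset.range (n + 1), (q - 1) ^ j * 1 ^ (n - j) * (n.choose j : ℂ) :=
          add_pow _ _ n
      _ = ∑ j ∈ Finset.range (n + 1), (n.choose j : ℂ) * (q - 1) ^ j := by
          refine Finset.sum_congr rfl fun j _ => by ring
      _ = ∑ j ∈ Finset.range K, (n.choose j : ℂ) * (q - 1) ^ j := by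
          refine Finset.sum_subset (Finset.range_subset_range.mpr hn) fun j hj hj' => ?_
          have hnj : n < j := by
            simp only [Finset.mem_range, not_lt] at hj'
            omega
          rw [Nat.choose_eq_zero_of_lt hnj]
          simp
  have hsum : ∑ α ∈ Finset.range K, q ^ (c * α ^ 2 % K)
      = ∑ j ∈ Finset.range K, (b j : ℂ) * (q - 1) ^ j := by
    have h1 : ∀ α ∈ Finset.range K, q ^ (c * α ^ 2 % K)
        = ∑ j ∈ Finset.range K, ((c * α ^ 2 % K).choose j : ℂ) * (q - 1) ^ j :=
      fun α _ => hexp _ (Nat.mod_lt _ hK.pos)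
    rw [Finset.sum_congr rfl h1, Finset.sum_comm]
    refine Finset.sum_congr rfl fun j _ => ?_
    rw [hb]
    push_cast
    rw [Finset.sum_mul]
  -- divisibility of low coefficients
  have hdvd : ∀ j, j < m → K ∣ b j := by
    intro j hj
    have hjK : j < K := hj.trans hmK
    set P : Polynomial (ZMod K) := descPochhammer (ZMod K) j with hP
    set Q : Polynomial (ZMod K) := P.comp (Polynomial.C (c : ZMod K) * Polynomial.X ^ 2)
      with hQ
    have key : ((j.factorial * b j : ℕ) : ZMod K) = 0 := by
      have h2 : j.factorial * b j = ∑ α ∈ Finset.range K, (c * α ^ 2 % K).descFactorial j := by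
        rw [hb, Finset.mul_sum]
        exact Finset.sum_congr rfl fun α _ =>
          (Nat.descFactorial_eq_factorial_mul_choose _ _).symm
      rw [h2]
      push_cast
      have h3 : ∀ α ∈ Finset.range K, (((c * α ^ 2 % K).descFactorial j : ZMod K))
          = Q.eval ((α : ZMod K)) := by
        intro α _
        rw [← descPochhammer_eval_eq_descFactorial (ZMod K) _ j]
        rw [hQ, Polynomial.eval_comp]
        congr 1
        push_cast [ZMod.natCast_mod]
        simp
      rw [Finset.sum_congr rfl h3, aux_sum_range_zmod (f := fun a => Q.eval a)]
      apply aux_sum_eval_zero hK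
      have hdeg1 : Q.natDegree ≤ j * 2 := by
        have hPdeg : P.natDegree = j := by
          rw [hP]; exact descPochhammer_natDegree (ZMod K) j
        have hX : (Polynomial.C (c : ZMod K) * Polynomial.X ^ 2 : Polynomial (ZMod K)).natDegree
            ≤ 2 := le_trans (Polynomial.natDegree_C_mul_le _ _) (by simp)
        have hcomp := Polynomial.natDegree_comp_le
          (p := P) (q := Polynomial.C (c : ZMod K) * Polynomial.X ^ 2)
        rw [hPdeg] at hcomp
        exact le_trans hcomp (Nat.mul_le_mul_left j hX)
      omega
    have hdvd' : K ∣ j.factorial * b j := (ZMod.natCast_eq_zero_iff _ _).mp key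
    rcases (Nat.Prime.dvd_mul hK).mp hdvd' with h | h
    · exact absurd (hK.dvd_factorial.mp h) (by omega)
    · exact h
  -- packaging
  obtain ⟨z, hzR, hzK⟩ := IsPrimitiveRoot.self_sub_one_pow_dvd_order hmK hprim
  have hqR : q ∈ Algebra.adjoin ℤ {q} := Algebra.self_mem_adjoin_singleton ℤ q
  have hxR : q - 1 ∈ Algebra.adjoin ℤ {q} := Subalgebra.sub_mem _ hqR (Subalgebra.one_mem _)
  refine ⟨z * (∑ j ∈ Finset.range m, ((b j / K : ℕ) : ℂ) * (q - 1) ^ j)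
      + ∑ j ∈ Finset.Ico m K, ((b j : ℕ) : ℂ) * (q - 1) ^ (j - m), ?_, ?_⟩
  · refine Subalgebra.add_mem _ (Subalgebra.mul_mem _ hzR ?_) ?_
    · exact Subalgebra.sum_mem _ fun j _ => Subalgebra.mul_mem _
        (Subalgebra.natCast_mem _ _) (Subalgebra.pow_mem _ hxR _)
    · exact Subalgebra.sum_mem _ fun j _ => Subalgebra.mul_mem _
        (Subalgebra.natCast_mem _ _) (Subalgebra.pow_mem _ hxR _)
  · rw [hsum, ← Finset.sum_range_add_sum_Ico _ hmK.le, mul_add]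
    congr 1
    · rw [Finset.mul_sum, Finset.mul_sum]
      refine Finset.sum_congr rfl fun j hj => ?_
      have hKb : (b j : ℂ) = (K : ℂ) * ((b j / K : ℕ) : ℂ) := by
        have := Nat.div_mul_cancel (hdvd j (Finset.mem_range.1 hj))
        calc (b j : ℂ) = ((b j / K * K : ℕ) : ℂ) := by rw [this]
          _ = (K : ℂ) * ((b j / K : ℕ) : ℂ) := by push_cast; ring
      rw [hKb, hzK]
      ring
    · rw [Finset.mul_sum]
      refine Finset.sum_congr rfl fun j hj => ?_
      have hmj : m ≤ j := (Finset.mem_Ico.1 hj).1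
      have : (q - 1) ^ j = (q - 1) ^ m * (q - 1) ^ (j - m) := by
        rw [← pow_add]
        congr 1
        omega
      rw [this]
      ring

lemma aux_unit {K : ℕ} (hK : K.Prime) (hodd : Odd K) {q : ℂ} (hprim : IsPrimitiveRoot q K) :
    ∃ T ∈ Algebra.adjoin ℤ {q}, (q - 1) ^ (K - 1) = (K : ℂ) * T := by
  haveI : NeZero K := ⟨hK.pos.ne'⟩
  haveI : Fact K.Prime := ⟨hK⟩
  have hq1 : q ^ K = 1 := hprim.pow_eq_one
  have hqR : q ∈ Algebra.adjoin ℤ {q} := Algebra.self_mem_adjoin_singleton ℤ q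
  have H : ∀ k : ℕ, ∃ t : ℂ, t ∈ Algebra.adjoin ℤ {q} ∧
      (k + 1 < K → (q ^ (k + 1) - 1) * t = q - 1) := by
    intro k
    by_cases hk : k + 1 < K
    · set i := k + 1 with hi
      have hine : ((i : ZMod K)) ≠ 0 := by
        intro h
        have := (ZMod.natCast_eq_zero_iff i K).mp h
        have := Nat.le_of_dvd (by omega) this
        omega
      set n := ((i : ZMod K)⁻¹).val with hn
      have hmul : ((i * n : ℕ) : ZMod K) = ((1 : ℕ) : ZMod K) := by
        rw [Nat.cast_mul, Nat.cast_one, hn, ZMod.natCast_zmod_val, mul_inv_cancel₀ hine]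
      have hmod : i * n % K = 1 := by
        have h2 : i * n % K = 1 % K := (ZMod.natCast_eq_natCast_iff _ _ _).mp hmul
        rwa [Nat.mod_eq_of_lt hK.one_lt] at h2
      refine ⟨∑ l ∈ Finset.range n, (q ^ i) ^ l, ?_, fun _ => ?_⟩
      · exact Subalgebra.sum_mem _ fun l _ => Subalgebra.pow_mem _
          (Subalgebra.pow_mem _ hqR _) _
      · have hg := geom_sum_mul (q ^ i) n
        rw [mul_comm, hg, ← pow_mul, ← aux_qpow_mod hq1 (i * n), hmod, pow_one]
    · exact ⟨1, Subalgebra.one_mem _, fun h => absurd h hk⟩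
  choose t htR hteq using H
  refine ⟨∏ k ∈ Finset.range (K - 1), t k, Subalgebra.prod_mem _ fun k _ => htR k, ?_⟩
  have hKsub : K - 1 + 1 = K := by
    have := hK.one_lt
    omega
  have hprim' : IsPrimitiveRoot q ((K - 1) + 1) := by rw [hKsub]; exact hprim
  have hP := IsPrimitiveRoot.prod_pow_sub_one_eq_order hprim'
  have heven : Even (K - 1) := Nat.Odd.sub_odd hodd odd_one
  rw [heven.neg_one_pow, one_mul] at hP
  have hProdK : ∏ k ∈ Finset.range (K - 1), (q ^ (k + 1) - 1) = (K : ℂ) := by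
    rw [hP]
    exact_mod_cast congrArg (Nat.cast : ℕ → ℂ) hKsub
  calc (q - 1) ^ (K - 1) = ∏ k ∈ Finset.range (K - 1), (q - 1) := by
        rw [Finset.prod_const, Finset.card_range]
    _ = ∏ k ∈ Finset.range (K - 1), ((q ^ (k + 1) - 1) * t k) := by
        refine Finset.prod_congr rfl fun k hk => ?_
        have hk1 : k + 1 < K := by
          have := Finset.mem_range.1 hk
          omega
        rw [hteq k hk1]
    _ = (∏ k ∈ Finset.range (K - 1), (q ^ (k + 1) - 1)) * ∏ k ∈ Finset.range (K - 1), t k := by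
        rw [Finset.prod_mul_distrib]
    _ = (K : ℂ) * ∏ k ∈ Finset.range (K - 1), t k := by rw [hProdK]

/-- For an odd prime `K`, `q = e^(2πi/K)`, `x = q - 1`, the Gauss sum
`Σ_{α=0}^{K-1} q^(α²)` equals `x^((K-1)/2) · u` for a unit `u` of `ℤ[q]`. -/
theorem stmt4 (K : ℕ) (hK : K.Prime) (hodd : Odd K)
    (q : ℂ) (hq : q = Complex.exp (2 * Real.pi * Complex.I / K)) :
    ∃ u v : ℂ, u ∈ Algebra.adjoin ℤ {q} ∧ v ∈ Algebra.adjoin ℤ {q} ∧ u * v = 1 ∧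
      ∑ α ∈ Finset.range K, q ^ (α ^ 2) = (q - 1) ^ ((K - 1) / 2) * u := by
  haveI : NeZero K := ⟨hK.pos.ne'⟩
  have hprim : IsPrimitiveRoot q K := by
    rw [hq]; exact Complex.isPrimitiveRoot_exp K hK.pos.ne'
  have hq1 : q ^ K = 1 := hprim.pow_eq_one
  have hqne : q ≠ 1 := hprim.ne_one hK.one_lt
  have hK2 : K % 2 = 1 := Nat.odd_iff.mp hodd
  have hKgt : 1 < K := hK.one_lt
  set m := (K - 1) / 2 with hm
  obtain ⟨u, huR, hu⟩ := aux_Gc hK hodd hprim 1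
  obtain ⟨u', hu'R, hu'⟩ := aux_Gc hK hodd hprim (K - 1)
  obtain ⟨T, hTR, hT⟩ := aux_unit hK hodd hprim
  have hg : ∑ α ∈ Finset.range K, q ^ (α ^ 2) = (q - 1) ^ m * u := by
    rw [← hu]
    refine Finset.sum_congr rfl fun α _ => ?_
    rw [one_mul, aux_qpow_mod hq1]
  have hgp := aux_gauss_prod hK hodd hq1 hqne
  have hgp' : ((q - 1) ^ m * u) * ((q - 1) ^ m * u') = (K : ℂ) := by
    rw [← hu, ← hu', ← hgp]
    congr 1
    refine Finset.sum_congr rfl fun α _ => ?_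
    rw [one_mul]
  have h2m : m + m = K - 1 := by omega
  have hx2m : (q - 1) ^ m * (q - 1) ^ m = (K : ℂ) * T := by
    rw [← pow_add, h2m, hT]
  have hKne : (K : ℂ) ≠ 0 := Nat.cast_ne_zero.mpr hK.pos.ne'
  have huv : u * (T * u') = 1 := by
    have h5 : (K : ℂ) * (T * (u * u')) = (K : ℂ) * 1 := by
      rw [mul_one]
      calc (K : ℂ) * (T * (u * u')) = ((q - 1) ^ m * u) * ((q - 1) ^ m * u') := by
            linear_combination (u * u') * hx2m.symm
        _ = (K : ℂ) := hgp'
    have h6 := mul_left_cancel₀ hKne h5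
    linear_combination h6
  exact ⟨u, T * u', huR, Subalgebra.mul_mem _ hTR hu'R, huv, hg⟩
end

section
/- Let K be an odd prime, q = e^(2πi/K), x = q − 1. For any integers p and m ≥ 0, the sum Σ over odd α with 1−K < α ≤ K−1 of q^(pα²)·α^(2m) is divisible in ℤ[q] by x^(max(0, (K-1)/2 − m)). -/
open Finset Polynomial

lemma aux_sum_eval {K : ℕ} [hKf : Fact K.Prime] (P : Polynomial (ZMod K)) (hP : P.natDegree < K - 1) :
    ∑ a : ZMod K, P.eval a = 0 := by
  have hd : ∀ a : ZMod K, P.eval a = ∑ d ∈ range (P.natDegree + 1), P.coeff d * a ^ d := by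
    intro a
    rw [Polynomial.eval_eq_sum_range]
  simp_rw [hd]
  rw [Finset.sum_comm]
  refine Finset.sum_eq_zero fun d hd => ?_
  rw [← Finset.mul_sum]
  have h0 : ∑ a : ZMod K, a ^ d = 0 := by
    apply FiniteField.sum_pow_lt_card_sub_one
    rw [ZMod.card]
    simp only [mem_range] at hd
    omega
  rw [h0, mul_zero]

lemma aux_mod (K : ℕ) (hK : K.Prime) (hodd : Odd K) (p : ℤ) (m n : ℕ)
    (h : 2 * n + 2 * m < K - 1) :
    (K : ℤ) ∣ ∑ j ∈ range K,
      (((p * (2 * (j : ℤ) - K) ^ 2 % K).toNat.choose n : ℤ) * (2 * (j : ℤ) - K) ^ (2 * m)) := by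
  haveI : Fact K.Prime := ⟨hK⟩
  have hK3 : 3 ≤ K := by
    obtain ⟨r, hr⟩ := hodd
    have := hK.two_le
    omega
  rw [← ZMod.intCast_zmod_eq_zero_iff_dvd]
  push_cast
  -- reduce the summand to a polynomial evaluation
  have h2 : (2 : ZMod K) ≠ 0 := by
    have : ((2 : ℕ) : ZMod K) ≠ 0 := by
      rw [Ne, ZMod.natCast_eq_zero_iff]
      intro hd
      have := Nat.le_of_dvd (by norm_num) hd
      omega
    simpa using this
  have hfac : ((n.factorial : ℕ) : ZMod K) ≠ 0 := by
    rw [Ne, ZMod.natCast_eq_zero_iff]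
    intro hd
    have := (Nat.Prime.dvd_factorial hK).mp hd
    omega
  set P : Polynomial (ZMod K) :=
    (descPochhammer (ZMod K) n).comp (C (p : ZMod K) * X ^ 2) * X ^ (2 * m) with hP
  have hsummand : ∀ j : ℕ,
      ((n.factorial : ℕ) : ZMod K) * (((p * (2 * (j : ℤ) - K) ^ 2 % K).toNat.choose n : ℕ) : ZMod K)
        * ((2 * (j : ℤ) - (K : ℤ) : ℤ) : ZMod K) ^ (2 * m)
      = P.eval (2 * (j : ZMod K)) := by
    intro j
    have he : (((p * (2 * (j : ℤ) - K) ^ 2 % K).toNat : ℕ) : ZMod K)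
        = (p : ZMod K) * (2 * (j : ZMod K)) ^ 2 := by
      have h0 : (0 : ℤ) ≤ p * (2 * (j : ℤ) - K) ^ 2 % K :=
        Int.emod_nonneg _ (by exact_mod_cast hK.pos.ne')
      calc (((p * (2 * (j : ℤ) - K) ^ 2 % K).toNat : ℕ) : ZMod K)
          = ((((p * (2 * (j : ℤ) - K) ^ 2 % K).toNat : ℤ)) : ZMod K) := by norm_cast
        _ = ((p * (2 * (j : ℤ) - K) ^ 2 % K : ℤ) : ZMod K) := by
            rw [Int.toNat_of_nonneg h0]
        _ = ((p * (2 * (j : ℤ) - K) ^ 2 : ℤ) : ZMod K) := ZMod.intCast_mod _ _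
        _ = (p : ZMod K) * (2 * (j : ZMod K)) ^ 2 := by
            push_cast
            rw [ZMod.natCast_self]
            ring
    have hdesc : ((n.factorial : ℕ) : ZMod K)
          * (((p * (2 * (j : ℤ) - K) ^ 2 % K).toNat.choose n : ℕ) : ZMod K)
        = (descPochhammer (ZMod K) n).eval ((p : ZMod K) * (2 * (j : ZMod K)) ^ 2) := by
      rw [← he, descPochhammer_eval_eq_descFactorial,
        Nat.descFactorial_eq_factorial_mul_choose]
      push_cast
      ring
    have hb : ((2 * (j : ℤ) - (K : ℤ) : ℤ) : ZMod K) = 2 * (j : ZMod K) := by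
      push_cast
      rw [ZMod.natCast_self]
      ring
    rw [hdesc, hb, hP]
    simp [eval_comp, mul_comm]
  have hdeg : P.natDegree < K - 1 := by
    have h1 : P.natDegree ≤ ((descPochhammer (ZMod K) n).comp
        (C (p : ZMod K) * X ^ 2)).natDegree + (X ^ (2 * m) : Polynomial (ZMod K)).natDegree :=
      natDegree_mul_le
    have h2 : ((descPochhammer (ZMod K) n).comp (C (p : ZMod K) * X ^ 2)).natDegree ≤
        (descPochhammer (ZMod K) n).natDegree * (C (p : ZMod K) * X ^ 2).natDegree :=
      natDegree_comp_le
    have h3 : (C (p : ZMod K) * X ^ 2 : Polynomial (ZMod K)).natDegree ≤ 2 :=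
      le_trans (natDegree_C_mul_le _ _) (le_of_eq (natDegree_X_pow 2))
    have h4 : (descPochhammer (ZMod K) n).natDegree = n := by simp
    have h5 : (X ^ (2 * m) : Polynomial (ZMod K)).natDegree = 2 * m := natDegree_X_pow _
    have h2' : ((descPochhammer (ZMod K) n).comp
        (C (p : ZMod K) * X ^ 2)).natDegree ≤ n * 2 := by
      refine le_trans h2 ?_
      rw [h4]
      exact Nat.mul_le_mul_left n h3
    have h7 : P.natDegree ≤ n * 2 + 2 * m := by
      refine le_trans h1 ?_
      rw [h5]
      exact Nat.add_le_add_right h2' _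
    omega
  have hs : ∑ j ∈ range K, P.eval (2 * (j : ZMod K)) = 0 := by
    have hbij : ∑ j ∈ range K, P.eval (2 * (j : ZMod K)) = ∑ a : ZMod K, P.eval (2 * a) := by
      refine Finset.sum_nbij' (i := fun j => ((j : ZMod K))) (j := fun a => a.val) ?_ ?_ ?_ ?_ ?_
      · intro a _; exact Finset.mem_univ _
      · intro a _
        rw [Finset.mem_range]
        exact ZMod.val_lt a
      · intro a ha
        rw [Finset.mem_range] at ha
        exact ZMod.val_cast_of_lt ha
      · intro a _
        exact ZMod.natCast_rightInverse a
      · intro a _; rfl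
    rw [hbij]
    have hbij2 : ∑ a : ZMod K, P.eval (2 * a) = ∑ a : ZMod K, P.eval a :=
      Fintype.sum_bijective (fun a : ZMod K => 2 * a) (mulLeft_bijective₀ _ h2)
        _ _ (fun a => rfl)
    rw [hbij2]
    exact aux_sum_eval P hdeg
  have hmul : (n.factorial : ZMod K) * ∑ j ∈ range K,
      ((((p * (2 * (j : ℤ) - K) ^ 2 % K).toNat.choose n : ℕ) : ZMod K)
        * ((2 * (j : ZMod K)) - (K : ZMod K)) ^ (2 * m)) = 0 := by
    rw [Finset.mul_sum, ← hs]
    refine Finset.sum_congr rfl fun j _ => ?_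
    rw [← hsummand j]
    push_cast
    ring
  rcases mul_eq_zero.mp hmul with hz | hz
  · exact absurd hz hfac
  · rw [← hz]

/-- For an odd prime `K`, `q = e^(2πi/K)`, `x = q - 1`, any integers `p` and `m ≥ 0`,
the sum over the `K` odd residues `α = 2j - K`, `0 ≤ j ≤ K-1`, of `q^(pα²)·α^(2m)`
is divisible in `ℤ[q]` by `x^(max(0, (K-1)/2 - m))` (natural subtraction). -/
theorem stmt7 (K : ℕ) (hK : K.Prime) (hodd : Odd K) (p : ℤ) (m : ℕ)
    (q : ℂ) (hq : q = Complex.exp (2 * Real.pi * Complex.I / K)) :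
    ∃ w ∈ Algebra.adjoin ℤ {q},
      ∑ j ∈ Finset.range K,
          q ^ (p * (2 * (j : ℤ) - K) ^ 2) * ((2 * (j : ℤ) - K : ℤ) : ℂ) ^ (2 * m)
        = (q - 1) ^ ((K - 1) / 2 - m) * w := by
  haveI : Fact K.Prime := ⟨hK⟩
  have hK0 : (K : ℕ) ≠ 0 := hK.pos.ne'
  have hK3 : 3 ≤ K := by
    obtain ⟨r, hr⟩ := hodd
    have := hK.two_le
    omega
  have hprim : IsPrimitiveRoot q K := hq ▸ Complex.isPrimitiveRoot_exp K hK0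
  have hqK : q ^ K = 1 := hprim.pow_eq_one
  have hq0 : q ≠ 0 := by
    intro h
    rw [h] at hqK
    simp [zero_pow hK0] at hqK
  set x : ℂ := q - 1 with hx
  set t : ℕ := (K - 1) / 2 - m with ht
  have htK : t ≤ K - 1 := by omega
  obtain ⟨z, hzmem, hz⟩ := hprim.self_sub_one_pow_dvd_order (k := K - 1) (by omega)
  set e : ℕ → ℕ := fun j => (p * (2 * (j : ℤ) - K) ^ 2 % K).toNat with he
  set c : ℕ → ℤ :=
    fun n => ∑ j ∈ Finset.range K, ((e j).choose n : ℤ) * (2 * (j : ℤ) - K) ^ (2 * m) with hc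
  have heK : ∀ j, e j < K := by
    intro j
    have h1 := Int.emod_lt_of_pos (p * (2 * (j : ℤ) - K) ^ 2) (b := K) (by exact_mod_cast hK.pos)
    have h2 := Int.emod_nonneg (p * (2 * (j : ℤ) - K) ^ 2) (b := K) (by exact_mod_cast hK0)
    simp only [he]
    omega
  have hzpow : ∀ j : ℕ, q ^ (p * (2 * (j : ℤ) - K) ^ 2) = q ^ (e j) := by
    intro j
    set a : ℤ := p * (2 * (j : ℤ) - K) ^ 2 with ha
    have h2 := Int.emod_nonneg a (b := K) (by exact_mod_cast hK0)
    calc q ^ a = q ^ ((K : ℤ) * (a / K) + a % K) := by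
          rw [Int.mul_ediv_add_emod a K]
      _ = (q ^ (K : ℤ)) ^ (a / K) * q ^ (a % K) := by
          rw [zpow_add₀ hq0, zpow_mul]
      _ = q ^ (a % K) := by
          rw [zpow_natCast, hqK, one_zpow, one_mul]
      _ = q ^ (e j) := by
          rw [he]
          rw [← zpow_natCast q (a % ↑K).toNat, Int.toNat_of_nonneg h2]
  have hbinom : ∀ j : ℕ, q ^ (e j)
      = ∑ n ∈ Finset.range K, ((e j).choose n : ℂ) * x ^ n := by
    intro j
    have hq1 : q = x + 1 := by rw [hx]; ring
    calc q ^ (e j) = (x + 1) ^ (e j) := by rw [← hq1]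
      _ = ∑ n ∈ Finset.range (e j + 1), x ^ n * 1 ^ (e j - n) * ((e j).choose n : ℂ) :=
          add_pow x 1 (e j)
      _ = ∑ n ∈ Finset.range (e j + 1), ((e j).choose n : ℂ) * x ^ n := by
          refine Finset.sum_congr rfl fun n _ => ?_
          ring
      _ = ∑ n ∈ Finset.range K, ((e j).choose n : ℂ) * x ^ n := by
          refine Finset.sum_subset ?_ ?_
          · exact Finset.range_subset_range.mpr (heK j)
          · intro n _ hn
            rw [Finset.mem_range, not_lt] at hn
            rw [Nat.choose_eq_zero_of_lt (by omega)]
            simp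
  have hS : ∑ j ∈ Finset.range K,
        q ^ (p * (2 * (j : ℤ) - K) ^ 2) * ((2 * (j : ℤ) - K : ℤ) : ℂ) ^ (2 * m)
      = ∑ n ∈ Finset.range K, (c n : ℂ) * x ^ n := by
    calc ∑ j ∈ Finset.range K,
          q ^ (p * (2 * (j : ℤ) - K) ^ 2) * ((2 * (j : ℤ) - K : ℤ) : ℂ) ^ (2 * m)
        = ∑ j ∈ Finset.range K, ∑ n ∈ Finset.range K,
            ((e j).choose n : ℂ) * x ^ n * ((2 * (j : ℤ) - K : ℤ) : ℂ) ^ (2 * m) := by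
          refine Finset.sum_congr rfl fun j _ => ?_
          rw [hzpow j, hbinom j, Finset.sum_mul]
      _ = ∑ n ∈ Finset.range K, (c n : ℂ) * x ^ n := by
          rw [Finset.sum_comm]
          refine Finset.sum_congr rfl fun n _ => ?_
          rw [hc]
          push_cast
          rw [Finset.sum_mul]
          refine Finset.sum_congr rfl fun j _ => ?_
          ring
  have hdvd : ∀ n, n < t → (K : ℤ) ∣ c n := by
    intro n hn
    exact aux_mod K hK hodd p m n (by omega)
  refine ⟨∑ n ∈ Finset.range K,
      (if n < t then ((c n / K : ℤ) : ℂ) * z * x ^ (K - 1 - t + n)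
        else (c n : ℂ) * x ^ (n - t)), ?_, ?_⟩
  · have hqmem : q ∈ Algebra.adjoin ℤ {q} := Algebra.self_mem_adjoin_singleton ℤ q
    have hxmem : x ∈ Algebra.adjoin ℤ {q} :=
      Subalgebra.sub_mem _ hqmem (Subalgebra.one_mem _)
    have hint : ∀ k : ℤ, ((k : ℤ) : ℂ) ∈ Algebra.adjoin ℤ {q} := by
      intro k
      have := Subalgebra.algebraMap_mem (Algebra.adjoin ℤ {q}) k
      rwa [algebraMap_int_eq, eq_intCast] at this
    refine Subalgebra.sum_mem _ fun n _ => ?_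
    split_ifs with hcase
    · exact Subalgebra.mul_mem _ (Subalgebra.mul_mem _ (hint _) hzmem)
        (Subalgebra.pow_mem _ hxmem _)
    · exact Subalgebra.mul_mem _ (hint _) (Subalgebra.pow_mem _ hxmem _)
  · rw [hS, Finset.mul_sum]
    refine Finset.sum_congr rfl fun n _ => ?_
    split_ifs with hcase
    · have hcn : (c n : ℂ) = (K : ℂ) * ((c n / K : ℤ) : ℂ) := by
        have h9 := Int.ediv_mul_cancel (hdvd n hcase)
        conv_lhs => rw [← h9]
        push_cast
        ring
      have hpow : x ^ t * x ^ (K - 1 - t + n) = x ^ (K - 1) * x ^ n := by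
        rw [← pow_add, ← pow_add]
        congr 1
        omega
      rw [hcn, hz]
      calc z * x ^ (K - 1) * ((c n / K : ℤ) : ℂ) * x ^ n
          = ((c n / K : ℤ) : ℂ) * z * (x ^ (K - 1) * x ^ n) := by ring
        _ = ((c n / K : ℤ) : ℂ) * z * (x ^ t * x ^ (K - 1 - t + n)) := by rw [hpow]
        _ = x ^ t * (((c n / K : ℤ) : ℂ) * z * x ^ (K - 1 - t + n)) := by ring
    · have hpow : x ^ t * x ^ (n - t) = x ^ n := by
        rw [← pow_add]
        congr 1
        omega
      rw [← hpow]
      ring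
end
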